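/- Let S be a nonempty ordered set. If the ordered set F(S) of final segments of S under reverse inclusion is Noetherian, then for every Noetherian ordered set T, the set Decr(S, T) of decreasing maps S → T, ordered pointwise, is Noetherian. -/

import Mathlib

/-!
A decreasing map `φ : S → T` has finite range: its range is well-quasi-ordered both by `≤`
(inside `T`) and by `≥` (as an antitone image of `S`, which embeds into `F(S)` via `x ↦ Ici x`).
Hence `φ` is recorded by the finite set of pairs `(t, {x | t ≤ φ x})` for `t` in its range, and
`φ ≤ ψ` as soon as every pair of `φ` is dominated by a pair of `ψ`. The superlevel sets are lower
sets, i.e. complements of final segments, so these pairs live in the well-quasi-order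
`T × LowerSet S`, and Higman's lemma makes domination of finite sets of pairs a
well-quasi-order as well.
-/

open Set

theorem List.SublistForall₂.exists_mem_of_mem {α β : Type*} {R : α → β → Prop}
    {l₁ : List α} {l₂ : List β} (h : List.SublistForall₂ R l₁ l₂) {a : α} (ha : a ∈ l₁) :
    ∃ b ∈ l₂, R a b := by
  induction h with
  | nil => simp at ha
  | cons hab _ ih =>
    rcases List.mem_cons.1 ha with rfl | ha
    · exact ⟨_, List.mem_cons_self, hab⟩
    · obtain ⟨b, hb, hab⟩ := ih ha
      exact ⟨b, List.mem_cons_of_mem _ hb, hab⟩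
  | cons_right _ ih =>
    obtain ⟨b, hb, hab⟩ := ih ha
    exact ⟨b, List.mem_cons_of_mem _ hb, hab⟩

theorem WellQuasiOrdered.sublistForall₂ {α : Type*} {r : α → α → Prop} [IsPreorder α r]
    (h : WellQuasiOrdered r) : WellQuasiOrdered (List.SublistForall₂ r) := fun f => by
  obtain ⟨m, n, hmn, hr⟩ := Set.PartiallyWellOrderedOn.partiallyWellOrderedOn_sublistForall₂ r
    (partiallyWellOrderedOn_univ_iff.2 h) fun n => ⟨f n, fun _ _ => mem_univ _⟩
  exact ⟨m, n, hmn, hr⟩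

/-- Higman's lemma for finite sets under the domination (Hoare) preorder. -/
theorem WellQuasiOrdered.exists_forall_exists_of_finite {α : Type*} {r : α → α → Prop}
    [IsPreorder α r] (h : WellQuasiOrdered r) (s : ℕ → Set α) (hs : ∀ n, (s n).Finite) :
    ∃ m n, m < n ∧ ∀ a ∈ s m, ∃ b ∈ s n, r a b := by
  obtain ⟨m, n, hmn, hr⟩ := h.sublistForall₂ fun n => (hs n).toFinset.toList
  refine ⟨m, n, hmn, fun a ha => ?_⟩
  obtain ⟨b, hb, hab⟩ := hr.exists_mem_of_mem (by simpa using ha)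
  exact ⟨b, by simpa using hb, hab⟩

section

variable {α β : Type*} [Preorder α]

theorem WellQuasiOrderedLE.of_upperSet [WellQuasiOrderedLE (UpperSet α)] : WellQuasiOrderedLE α :=
  ⟨fun f => by
    obtain ⟨m, n, hmn, hle⟩ := wellQuasiOrdered_le fun n => UpperSet.Ici (f n)
    exact ⟨m, n, hmn, UpperSet.le_Ici.1 hle⟩⟩

theorem Antitone.finite_range [PartialOrder β] [WellQuasiOrderedLE α] [WellQuasiOrderedLE β]
    {φ : α → β} (hφ : Antitone φ) : (range φ).Finite := by
  by_contra hinf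
  let e := (Set.infinite_coe_iff.2 hinf).natEmbedding
  obtain ⟨g, hg⟩ := wellQuasiOrdered_le.exists_monotone_subseq fun n => (e n : β)
  choose x hx using fun n => (e (g n)).2
  obtain ⟨m, n, hmn, hle⟩ := wellQuasiOrdered_le x
  have hval : (e (g m) : β) = e (g n) := le_antisymm (hg m n hmn.le) (hx m ▸ hx n ▸ hφ hle)
  exact hmn.ne (g.injective (e.injective (Subtype.ext hval)))

variable [Preorder β]

def Antitone.superlevelSet {φ : α → β} (hφ : Antitone φ) (t : β) : LowerSet α :=
  ⟨{x | t ≤ φ x}, fun _ _ hxy ht => ht.trans (hφ hxy)⟩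

def Antitone.levels {φ : α → β} (hφ : Antitone φ) : Set (β × LowerSet α) :=
  range fun x => (φ x, hφ.superlevelSet (φ x))

theorem Antitone.le_of_forall_levels {φ ψ : α → β} (hφ : Antitone φ) (hψ : Antitone ψ)
    (h : ∀ p ∈ hφ.levels, ∃ q ∈ hψ.levels, p ≤ q) (x : α) : φ x ≤ ψ x := by
  obtain ⟨_, ⟨y, rfl⟩, hle, hsub⟩ := h _ ⟨x, rfl⟩
  have hx : x ∈ hφ.superlevelSet (φ x) := le_refl (φ x)
  exact hle.trans (hsub hx)

end

instance Antitone.wellQuasiOrderedLE {α β : Type*} [Preorder α] [PartialOrder β]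
    [WellQuasiOrderedLE (UpperSet α)] [WellQuasiOrderedLE β] :
    WellQuasiOrderedLE {φ : α → β // Antitone φ} := by
  have := WellQuasiOrderedLE.of_upperSet (α := α)
  have : WellQuasiOrderedLE (LowerSet α) := upperSetIsoLowerSet.wellQuasiOrderedLE_iff.1 ‹_›
  refine ⟨fun Φ => ?_⟩
  have hfin n : (Φ n).2.levels.Finite := by
    rw [Antitone.levels, range_comp' (fun t => (t, (Φ n).2.superlevelSet t))]
    exact (Φ n).2.finite_range.image _
  obtain ⟨m, n, hmn, hdom⟩ :=
    wellQuasiOrdered_le.exists_forall_exists_of_finite _ hfin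
  exact ⟨m, n, hmn, (Φ m).2.le_of_forall_levels (Φ n).2 hdom⟩

theorem stmt_8_general {S : Type*} [PartialOrder S]
    (hFS : ∀ F : ℕ → {A : Set S // IsUpperSet A},
      ∃ i j : ℕ, i < j ∧ ((F j : Set S)) ⊆ (F i : Set S)) :
    ∀ (T : Type*) [PartialOrder T],
      (∀ f : ℕ → T, ∃ i j : ℕ, i < j ∧ f i ≤ f j) →
      ∀ Φ : ℕ → {φ : S → T // Antitone φ},
        ∃ i j : ℕ, i < j ∧ ∀ x : S, (Φ i).1 x ≤ (Φ j).1 x := by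
  intro T _ hT Φ
  have : WellQuasiOrderedLE (UpperSet S) := ⟨fun F => hFS fun n => ⟨F n, (F n).upper⟩⟩
  have : WellQuasiOrderedLE T := ⟨hT⟩
  exact wellQuasiOrdered_le Φ

/-- Let `S` be a nonempty ordered set. If the set of final segments of `S`, ordered by
reverse inclusion, is Noetherian, then for every Noetherian ordered set `T` the set of
decreasing maps `S → T`, ordered pointwise, is Noetherian. -/
theorem stmt_8 {S : Type*} [PartialOrder S] [Nonempty S]
    (hFS : ∀ F : ℕ → {A : Set S // IsUpperSet A},
      ∃ i j : ℕ, i < j ∧ ((F j : Set S)) ⊆ (F i : Set S)) :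
    ∀ (T : Type*) [PartialOrder T],
      (∀ f : ℕ → T, ∃ i j : ℕ, i < j ∧ f i ≤ f j) →
      ∀ Φ : ℕ → {φ : S → T // Antitone φ},
        ∃ i j : ℕ, i < j ∧ ∀ x : S, (Φ i).1 x ≤ (Φ j).1 x :=
  stmt_8_general hFS
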